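/- Let n ≥ 1, r ≥ 0 and t ≥ max(n, r) be integers. The set {((a,b;c,d), z) ∈ U^H₁(p^t) : b ∈ pⁿℤ_p and a − z ∈ pⁿℤ_p} (which equals U^H₁(p^t) ∩ ι^{−1}(u U_{n,p} u^{−1})) is a subgroup of U^H₁(p^t) of index p^{2n−1}(p−1). -/

import Mathlib

/-!
Both groups are cut out by stabilisers of row vectors. Let `(g, z)` act on rows by
`v ↦ z • v g⁻¹`; then `((a,b;c,d), z)` fixes `e₀ = (1,0)` modulo `pⁿ` iff `(a,b) ≡ (z,0)`,
so the intersection is the stabiliser of `e₀` inside `U^H₁(p^t)`, while `U^H₁(p^t)` fixes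
`e₁ = (0,1)` modulo `p^t` under `g` alone. By orbit–stabiliser the index is the size of the
orbit of `e₀` modulo `pⁿ`, which for `t ≥ n` consists of the rows `(α, β)` with `α` a unit:
there are `φ(pⁿ) · pⁿ = p^{2n−1}(p−1)` of them.
-/

/-- The level group `U^H₁(p^t) ⊂ GL₂(ℤ_p) × ℤ_p^×`: pairs `((a,b;c,d), z)` with
`c ∈ p^tℤ_p` and `d ∈ 1 + p^tℤ_p`. -/
def UH1 (p : ℕ) [Fact p.Prime] (t : ℕ) : Set ((Matrix (Fin 2) (Fin 2) ℤ_[p])ˣ × ℤ_[p]ˣ) :=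
  {x | (p : ℤ_[p]) ^ t ∣ (x.1 : Matrix (Fin 2) (Fin 2) ℤ_[p]) 1 0 ∧
       (p : ℤ_[p]) ^ t ∣ ((x.1 : Matrix (Fin 2) (Fin 2) ℤ_[p]) 1 1 - 1)}

/-- The subset `U^H₁(p^t) ∩ ι^{−1}(u U_{n,p} u^{−1})`, i.e. those `((a,b;c,d), z) ∈ U^H₁(p^t)`
with `b ≡ 0 (mod pⁿℤ_p)` and `a ≡ z (mod pⁿℤ_p)`. -/
def UHcap (p : ℕ) [Fact p.Prime] (t n : ℕ) : Set ((Matrix (Fin 2) (Fin 2) ℤ_[p])ˣ × ℤ_[p]ˣ) :=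
  {x | x ∈ UH1 p t ∧
       (p : ℤ_[p]) ^ n ∣ (x.1 : Matrix (Fin 2) (Fin 2) ℤ_[p]) 0 1 ∧
       (p : ℤ_[p]) ^ n ∣ ((x.1 : Matrix (Fin 2) (Fin 2) ℤ_[p]) 0 0 - (x.2 : ℤ_[p]))}

section RowAction

open Matrix

variable {ι R : Type*} [Fintype ι] [DecidableEq ι] [CommRing R]

instance : MulAction ((Matrix ι ι R)ˣ × Rˣ) (ι → R) where
  smul g v := (g.2 : R) • v ᵥ* ↑g.1⁻¹
  one_smul v := by
    change ((1 : Rˣ) : R) • v ᵥ* ((1 : (Matrix ι ι R)ˣ)⁻¹ : (Matrix ι ι R)ˣ) = v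
    simp
  mul_smul g h v := by
    change (((g * h).2 : Rˣ) : R) • v ᵥ* ((g * h).1⁻¹ : (Matrix ι ι R)ˣ) =
      (g.2 : R) • ((h.2 : R) • v ᵥ* ((h.1⁻¹ : (Matrix ι ι R)ˣ) : Matrix ι ι R)) ᵥ*
        ((g.1⁻¹ : (Matrix ι ι R)ˣ) : Matrix ι ι R)
    simp [vecMul_vecMul, smul_vecMul, mul_smul]

theorem prod_units_smul_def (g : (Matrix ι ι R)ˣ × Rˣ) (v : ι → R) :
    g • v = (g.2 : R) • v ᵥ* ↑g.1⁻¹ := rfl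

theorem prod_units_smul_eq_iff (g : (Matrix ι ι R)ˣ × Rˣ) (v w : ι → R) :
    g • v = w ↔ (g.2 : R) • v = w ᵥ* ↑g.1 := by
  rw [prod_units_smul_def, ← smul_vecMul]
  constructor
  · rintro rfl; simp [vecMul_vecMul]
  · intro h; simp [h, vecMul_vecMul]

theorem prod_units_smul_single_one_eq_self_iff (g : (Matrix ι ι R)ˣ × Rˣ) (i : ι) :
    g • (Pi.single i 1 : ι → R) = Pi.single i 1 ↔
      (g.1 : Matrix ι ι R) i = Pi.single i (g.2 : R) := by
  rw [prod_units_smul_eq_iff, single_one_vecMul, ← Pi.single_smul', smul_eq_mul, mul_one,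
    eq_comm]
  rfl

end RowAction

open Matrix in
theorem isUnit_zero_zero_of_row_one_eq_single {R : Type*} [CommRing R]
    (N : (Matrix (Fin 2) (Fin 2) R)ˣ) (h : (N : Matrix (Fin 2) (Fin 2) R) 1 = Pi.single 1 1) :
    IsUnit ((N : Matrix (Fin 2) (Fin 2) R) 0 0) := by
  have h10 : (N : Matrix (Fin 2) (Fin 2) R) 1 0 = 0 := by simp [h]
  have h11 : (N : Matrix (Fin 2) (Fin 2) R) 1 1 = 1 := by simp [h]
  simpa [det_fin_two, h10, h11] using isUnits_det_units N

theorem ncard_setOf_isUnit_zero {R : Type*} [CommRing R] :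
    {v : Fin 2 → R | IsUnit (v 0)}.ncard = Nat.card Rˣ * Nat.card R := by
  have hrange :
      {v : Fin 2 → R | IsUnit (v 0)} = Set.range fun x : Rˣ × R => ![(x.1 : R), x.2] := by
    ext v
    refine ⟨fun hv => ⟨(hv.unit, v 1), ?_⟩, ?_⟩
    · ext i; fin_cases i <;> simp
    · rintro ⟨x, rfl⟩; simp
  rw [hrange, Set.ncard_range_of_injective, Nat.card_prod]
  intro x y hxy
  have h0 := congrFun hxy 0
  have h1 := congrFun hxy 1
  simp only [Matrix.cons_val_zero, Matrix.cons_val_one] at h0 h1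
  exact Prod.ext (Units.ext h0) h1

namespace PadicInt

variable {p : ℕ} [Fact p.Prime]

theorem toZModPow_eq_zero_iff_dvd (m : ℕ) (x : ℤ_[p]) :
    toZModPow m x = 0 ↔ (p : ℤ_[p]) ^ m ∣ x := by
  rw [← RingHom.mem_ker, ker_toZModPow, Ideal.mem_span_singleton]

theorem toZModPow_eq_iff_dvd_sub (m : ℕ) (x y : ℤ_[p]) :
    toZModPow m x = toZModPow m y ↔ (p : ℤ_[p]) ^ m ∣ x - y := by
  rw [← toZModPow_eq_zero_iff_dvd, map_sub, sub_eq_zero]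

theorem isUnit_of_isUnit_toZModPow {m : ℕ} (hm : m ≠ 0) {x : ℤ_[p]}
    (h : IsUnit (toZModPow m x)) : IsUnit x :=
  have : Fact (1 < p ^ m) := ⟨Nat.one_lt_pow hm (Fact.out : p.Prime).one_lt⟩
  have := IsLocalHom.of_surjective _ (ZMod.ringHom_surjective (toZModPow (p := p) m))
  isUnit_of_map_unit _ x h

end PadicInt

section LevelGroups

open MulAction PadicInt

variable (p : ℕ) [Fact p.Prime]

local notation "G" => (Matrix (Fin 2) (Fin 2) ℤ_[p])ˣ × ℤ_[p]ˣ
local notation "G_[" m "]" => (Matrix (Fin 2) (Fin 2) (ZMod (p ^ m)))ˣ × (ZMod (p ^ m))ˣ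

noncomputable def reduceModPow (m : ℕ) : G →* G_[m] :=
  (Units.map (toZModPow m).mapMatrix.toMonoidHom).prodMap (Units.map (toZModPow m).toMonoidHom)

noncomputable def UH1Subgroup (t : ℕ) : Subgroup G :=
  (stabilizer G_[t] (Pi.single 1 1 : Fin 2 → ZMod (p ^ t))).comap
    ((Units.map (toZModPow t).mapMatrix.toMonoidHom).prodMap 1)

noncomputable def UHcapSubgroup (t n : ℕ) : Subgroup G :=
  UH1Subgroup p t ⊓
    (stabilizer G_[n] (Pi.single 0 1 : Fin 2 → ZMod (p ^ n))).comap (reduceModPow p n)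

variable {p}

theorem mem_UH1Subgroup_iff {t : ℕ} {x : G} :
    x ∈ UH1Subgroup p t ↔
      ((reduceModPow p t x).1 : Matrix (Fin 2) (Fin 2) (ZMod (p ^ t))) 1 = Pi.single 1 1 := by
  rw [UH1Subgroup, Subgroup.mem_comap, mem_stabilizer_iff, prod_units_smul_single_one_eq_self_iff]
  rfl

theorem coe_UH1Subgroup (t : ℕ) : (UH1Subgroup p t : Set G) = UH1 p t := by
  ext x
  simp only [SetLike.mem_coe, mem_UH1Subgroup_iff, UH1, Set.mem_ofPred_eq, funext_iff,
    Fin.forall_fin_two]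
  simp [reduceModPow, toZModPow_eq_zero_iff_dvd, ← toZModPow_eq_iff_dvd_sub]

theorem reduceModPow_smul_single_zero_eq_self_iff {n : ℕ} {x : G} :
    reduceModPow p n x • (Pi.single 0 1 : Fin 2 → ZMod (p ^ n)) = Pi.single 0 1 ↔
      (p : ℤ_[p]) ^ n ∣ (x.1 : Matrix (Fin 2) (Fin 2) ℤ_[p]) 0 1 ∧
      (p : ℤ_[p]) ^ n ∣ ((x.1 : Matrix (Fin 2) (Fin 2) ℤ_[p]) 0 0 - (x.2 : ℤ_[p])) := by
  rw [prod_units_smul_single_one_eq_self_iff, funext_iff, Fin.forall_fin_two, and_comm]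
  simp [reduceModPow, toZModPow_eq_zero_iff_dvd, ← toZModPow_eq_iff_dvd_sub]

theorem coe_UHcapSubgroup (t n : ℕ) : (UHcapSubgroup p t n : Set G) = UHcap p t n := by
  ext x
  rw [UHcap, Set.mem_ofPred_eq, SetLike.mem_coe, ← coe_UH1Subgroup, SetLike.mem_coe,
    UHcapSubgroup, Subgroup.mem_inf, Subgroup.mem_comap, mem_stabilizer_iff,
    reduceModPow_smul_single_zero_eq_self_iff]

theorem UH1Subgroup_antitone : Antitone (UH1Subgroup p) := fun n t hnt x hx => by
  rw [← SetLike.mem_coe, coe_UH1Subgroup] at hx ⊢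
  exact ⟨(pow_dvd_pow _ hnt).trans hx.1, (pow_dvd_pow _ hnt).trans hx.2⟩

open Matrix in
theorem orbit_map_UH1Subgroup {n t : ℕ} (hn : n ≠ 0) (hnt : n ≤ t) :
    orbit ((UH1Subgroup p t).map (reduceModPow p n)) (Pi.single 0 1 : Fin 2 → ZMod (p ^ n)) =
      {v | IsUnit (v 0)} := by
  ext v
  rw [mem_orbit_iff, Set.mem_ofPred_eq]
  constructor
  · rintro ⟨⟨_, x, hx, rfl⟩, rfl⟩
    have hrow : ((reduceModPow p n x)⁻¹.1 : Matrix (Fin 2) (Fin 2) (ZMod (p ^ n))) 1 =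
        Pi.single 1 1 := by
      rw [← map_inv]
      exact mem_UH1Subgroup_iff.mp (UH1Subgroup_antitone hnt (inv_mem hx))
    rw [Subgroup.smul_def, prod_units_smul_def, Pi.smul_apply, single_one_vecMul,
      ← Prod.fst_inv]
    exact (Units.isUnit _).mul (isUnit_zero_zero_of_row_one_eq_single _ hrow)
  · intro hv
    obtain ⟨a, ha⟩ := ZMod.ringHom_surjective (toZModPow (p := p) n) (v 0)
    obtain ⟨b, hb⟩ := ZMod.ringHom_surjective (toZModPow (p := p) n) (v 1)
    have hM : IsUnit !![a, b; 0, 1] := by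
      rw [isUnit_iff_isUnit_det, det_fin_two_of, mul_one, mul_zero, sub_zero]
      exact isUnit_of_isUnit_toZModPow hn (ha ▸ hv)
    have hg : (hM.unit, 1) ∈ UH1Subgroup p t := by
      rw [mem_UH1Subgroup_iff]; ext j; fin_cases j <;> simp [reduceModPow]
    refine ⟨⟨_, Subgroup.mem_map_of_mem _ (inv_mem hg)⟩, ?_⟩
    rw [Subgroup.mk_smul, prod_units_smul_def]
    ext j; fin_cases j <;> simp [reduceModPow, ha, hb]

theorem relIndex_UHcapSubgroup {n t : ℕ} (hn : n ≠ 0) (hnt : n ≤ t) :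
    (UHcapSubgroup p t n).relIndex (UH1Subgroup p t) = (p ^ n).totient * p ^ n := by
  have : NeZero (p ^ n) := ⟨pow_ne_zero n (Fact.out : p.Prime).ne_zero⟩
  rw [UHcapSubgroup, Subgroup.inf_relIndex_left, Subgroup.relIndex_comap, Subgroup.relIndex]
  change (stabilizer ((UH1Subgroup p t).map (reduceModPow p n)) _).index = _
  rw [index_stabilizer, orbit_map_UH1Subgroup hn hnt, ncard_setOf_isUnit_zero, Nat.card_zmod,
    Nat.card_eq_fintype_card, ZMod.card_units_eq_totient]

end LevelGroups

/-- **Index of the intersection level group.**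
Let `n ≥ 1`, `r ≥ 0` and `t ≥ max(n, r)` be integers.  The set
`{((a,b;c,d), z) ∈ U^H₁(p^t) : b ∈ pⁿℤ_p and a − z ∈ pⁿℤ_p}` is a subgroup of `U^H₁(p^t)`
of index `p^{2n−1}(p−1)`. -/
theorem stmt_2 (p : ℕ) [Fact p.Prime] (n r t : ℕ) (hn : 1 ≤ n) (ht : max n r ≤ t) :
    ∃ U K : Subgroup ((Matrix (Fin 2) (Fin 2) ℤ_[p])ˣ × ℤ_[p]ˣ),
      (U : Set ((Matrix (Fin 2) (Fin 2) ℤ_[p])ˣ × ℤ_[p]ˣ)) = UH1 p t ∧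
      (K : Set ((Matrix (Fin 2) (Fin 2) ℤ_[p])ˣ × ℤ_[p]ˣ)) = UHcap p t n ∧
      K ≤ U ∧
      K.relIndex U = p ^ (2 * n - 1) * (p - 1) := by
  refine ⟨UH1Subgroup p t, UHcapSubgroup p t n, coe_UH1Subgroup t, coe_UHcapSubgroup t n,
    inf_le_left, ?_⟩
  rw [relIndex_UHcapSubgroup (by omega) (le_of_max_le_left ht),
    Nat.totient_prime_pow Fact.out (by omega), show 2 * n - 1 = (n - 1) + n by omega, pow_add]
  ring
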